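/- arXiv:1904.05928 — 4 statements merged into one kernel-verified Lean document; each statement's English description precedes it below -/
import Mathlib

section
/- Let p be a selective ultrafilter on ω. Suppose 𝒢 is a finite subset of G^ω whose elements are pairwise non-equivalent mod p, none of which is ≃_p-equivalent to a constant sequence, and such that {[f]_p : f ∈ 𝒢} ∪ {[χ_{→ν}]_p : ν < κ} is ℚ-linearly independent in G^ω/p. Then: either there exist μ < κ, g* ∈ 𝒢 and A ∈ p such that the sequence (g*(n)(μ))_{n∈A} is one-to-one, or there exists A ∈ p such that for every g ∈ 𝒢 there exists ζ_g ∈ κ^ω satisfying ζ_g(n) ∈ supp g(n) for all n ∈ A and such that the restriction of ζ_g to A is one-to-one. -/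
open Filter Topology Set Pointwise

noncomputable section

/-- Index set of a cardinal `κ`: the ordinals below `κ.ord`. -/
abbrev Idx (κ : Cardinal) : Type _ := {o : Ordinal // o < κ.ord}

/-- `G = ℚ^(κ)`, the direct sum of `κ` copies of `ℚ`. -/
abbrev Gk (κ : Cardinal) : Type _ := Idx κ →₀ ℚ

/-- `χ_μ`, the canonical generator at coordinate `μ`. -/
def chi {κ : Cardinal} (μ : Idx κ) : Gk κ := Finsupp.single μ 1

/-- A selective ultrafilter: for every partition of `ω` (given by the fibers of a function)
into sets not belonging to `p`, there is a member of `p` meeting each piece in at most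
one point. -/
def IsSelective (p : Ultrafilter ℕ) : Prop :=
  ∀ f : ℕ → ℕ, (∀ k, {n | f n = k} ∉ p) → ∃ A ∈ p, Set.InjOn f A

/-- `l` is a `p`-limit of the sequence `x`. -/
def IsPLim {X : Type*} [TopologicalSpace X] (p : Ultrafilter ℕ) (x : ℕ → X) (l : X) : Prop :=
  ∀ U ∈ nhds l, {n | x n ∈ U} ∈ p

/-- The class `[f]_p` of `f ∈ G^ω` in the ultrapower `G^ω/p`. -/
def germOf {κ : Cardinal} (p : Ultrafilter ℕ) (f : ℕ → Gk κ) :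
    Filter.Germ (p : Filter ℕ) (Gk κ) := Filter.Germ.ofFun f

/-- The subgroup (indeed `ℚ`-subspace) `ℚ^(C)` of elements supported in `C`. -/
def Qc {κ : Cardinal} (C : Set (Idx κ)) : Submodule ℚ (Gk κ) where
  carrier := {g : Gk κ | ↑g.support ⊆ C}
  add_mem' := by
    classical
    intro a b ha hb
    exact (Finset.coe_subset.mpr Finsupp.support_add).trans
      (by rw [Finset.coe_union]; exact Set.union_subset ha hb)
  zero_mem' := by simp
  smul_mem' := by
    intro c g hg
    exact (Finset.coe_subset.mpr Finsupp.support_smul).trans hg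

/-- The circle group `𝕋 = ℝ/ℤ`. -/
abbrev Circ : Type := UnitAddCircle

/-- The quotient map `ℝ → 𝕋`. -/
def toCirc : ℝ → Circ := fun x => (x : Circ)

/-- The open arc which is the image of the interval `(a, a + ε)`. -/
def arcOf (a ε : ℝ) : Set Circ := toCirc '' Set.Ioo a (a + ε)

/-- A subset of `𝕋` is an (open) arc if it is the image of an open interval. -/
def IsArc (s : Set Circ) : Prop := ∃ a b : ℝ, s = toCirc '' Set.Ioo a b

/-- `s` is an arc of length `ε`. -/
def HasArcLen (s : Set Circ) (ε : ℝ) : Prop := ∃ a : ℝ, s = arcOf a ε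

/-- The setwise rational multiple of a subset of `𝕋`. -/
def smulArc (q : ℚ) (s : Set Circ) : Set Circ :=
  {y | ∃ x : ℝ, toCirc x ∈ s ∧ y = toCirc ((q : ℝ) * x)}

/-- The support of an arc function. -/
def arcSupp {κ : Cardinal} (ψ : Idx κ → Set Circ) : Set (Idx κ) := {ξ | ψ ξ ≠ Set.univ}

/-- An arc function: finitely many coordinates carry a proper arc, the rest are `𝕋`. -/
def IsArcFun {κ : Cardinal} (ψ : Idx κ → Set Circ) : Prop :=
  (∀ ξ, IsArc (ψ ξ)) ∧ (arcSupp ψ).Finite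

/-- An `ε`-arc function. -/
def IsArcFunLen {κ : Cardinal} (ψ : Idx κ → Set Circ) (ε : ℝ) : Prop :=
  IsArcFun ψ ∧ ∀ ξ ∈ arcSupp ψ, HasArcLen (ψ ξ) ε

/-- The order on arc functions: `ψ ≤ φ` iff coordinatewise either equal or with closure
contained. -/
def ArcFunLE {κ : Cardinal} (ψ φ : Idx κ → Set Circ) : Prop :=
  ∀ ξ, ψ ξ = φ ξ ∨ closure (ψ ξ) ⊆ φ ξ

/-- `χ` is an `n`-solution of the arc equation `(ϱ, A, K·F, K n, U)`, where the family of the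
equation is `K·F = {K·h : h ∈ F}` and the arcs `U` are indexed by the original family `F`. -/
def IsNSolK {κ : Cardinal} (ϱ : Idx κ → Set Circ) (F : Set (ℕ → Gk κ)) (Kn : ℕ)
    (U : (ℕ → Gk κ) → Set Circ) (n : ℕ) (χ : Idx κ → Set Circ) : Prop :=
  IsArcFun χ ∧ ArcFunLE (fun ξ => smulArc (Kn : ℚ) (χ ξ)) ϱ ∧
  ∀ h ∈ F, (∑ μ ∈ (h n).support, smulArc ((Kn : ℚ) * h n μ) (χ μ)) ⊆ U h

/-- A sequence in `G^ω` all of whose values are integers (i.e. an element of `(ℤ^(κ))^ω`). -/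
def IsIntSeq {κ : Cardinal} (h : ℕ → Gk κ) : Prop := ∀ n μ, ∃ z : ℤ, h n μ = (z : ℚ)

/-- Monotone (not necessarily strictly) on `A`. -/
def MonoOnA (A : Set ℕ) (g : ℕ → ℝ) : Prop := MonotoneOn g A ∨ AntitoneOn g A

/-- Strictly monotone on `A`. -/
def StrictMonoOnA (A : Set ℕ) (g : ℕ → ℝ) : Prop := StrictMonoOn g A ∨ StrictAntiOn g A

/-- The sequence `g`, along `A`, converges to an element of the extended real line. -/
def ConvETo (A : Set ℕ) (g : ℕ → ℝ) : Prop :=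
  (∃ c : ℝ, Tendsto g (atTop ⊓ 𝓟 A) (nhds c)) ∨
    Tendsto g (atTop ⊓ 𝓟 A) atTop ∨ Tendsto g (atTop ⊓ 𝓟 A) atBot

/-- A rational stack. -/
structure RationalStack (κ : Cardinal) (p : Ultrafilter ℕ) where
  A : Set ℕ
  k0 : ℕ
  k1 : ℕ
  l : ℕ → ℕ
  ν : ℕ → Idx κ
  ζ : ℕ → ℕ → Idx κ
  K : ℕ → ℕ
  T : ℕ
  Br : ℕ → ℕ → Set (ℕ → Gk κ)
  A_infinite : A.Infinite
  k0_le_k1 : k0 ≤ k1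
  k1_pos : 0 < k1
  T_pos : 0 < T
  K_ge_two : ∀ n, 2 ≤ K n
  K_div : ∀ n ∈ A, (Nat.factorial n * T) ∣ K n
  Br_finite : ∀ i < k1, ∀ j < l i, (Br i j).Finite
  Br_int : ∀ i < k1, ∀ j < l i, ∀ h ∈ Br i j, IsIntSeq h
  cond_i : ∀ i < k0, ∀ n ∈ A, ζ i n = ν i
  cond_ii_a : ∀ i < k0, ∀ i' < k0, i ≠ i' → ν i ≠ ν i'
  cond_ii_b : ∀ i < k0, ∀ j, k0 ≤ j → j < k1 → ∀ n ∈ A, ν i ≠ ζ j n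
  cond_ii_c : ∀ j j' : ℕ, k0 ≤ j → j < k1 → k0 ≤ j' → j' < k1 →
    ∀ n ∈ A, ∀ n' ∈ A, (j, n) ≠ (j', n') → ζ j n ≠ ζ j' n'
  cond_iii : ∀ i < k1, ∀ j < l i, ∀ h ∈ Br i j, ∀ n ∈ A, ζ i n ∈ (h n).support
  cond_iv : ∀ i, ∀ i', i < i' → i' < k1 → ∀ j < l i', ∀ h ∈ Br i' j, ∀ n ∈ A,
    ζ i n ∉ (h n).support
  cond_v : ∀ i < k1, ∀ j < l i, ∀ h ∈ Br i j,
    MonoOnA A (fun n => (h n (ζ i n) : ℝ) / (K n : ℝ)) ∧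
    ConvETo A (fun n => (h n (ζ i n) : ℝ) / (K n : ℝ))
  cond_vi : ∀ i < k1, ∀ j < l i, ∃ hs ∈ Br i j, ∃ θ : (ℕ → Gk κ) → ℝ,
    (∀ h ∈ Br i j, Tendsto (fun n => (h n (ζ i n) : ℝ) / (hs n (ζ i n) : ℝ))
      (atTop ⊓ 𝓟 A) (nhds (θ h))) ∧
    LinearIndependent ℚ (fun h : (Br i j) => θ h.1)
  cond_vii : ∀ i < k1, ∀ j' j : ℕ, j' < j → j < l i → ∀ h ∈ Br i j, ∀ h' ∈ Br i j',
    MonoOnA A (fun n => (h n (ζ i n) : ℝ) / (h' n (ζ i n) : ℝ)) ∧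
    Tendsto (fun n => (h n (ζ i n) : ℝ) / (h' n (ζ i n) : ℝ)) (atTop ⊓ 𝓟 A) (nhds 0)
  cond_viii : ∀ i < k0, ∃ j < l i, (fun n => ((K n : ℚ) / (T : ℚ)) • chi (ν i)) ∈ Br i j
  cond_ix : ∀ i < k1, ∀ j < l i, ∀ h ∈ Br i j,
    StrictMonoOn (fun n => |(h n (ζ i n) : ℝ)|) A
  cond_x : ∀ i < k1, ∀ j < l i, ∀ h ∈ Br i j, ∀ h' ∈ Br i j, h ≠ h' →
    (∀ n ∈ A, |h n (ζ i n)| > |h' n (ζ i n)|) ∨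
    (∀ n ∈ A, |h n (ζ i n)| = |h' n (ζ i n)|) ∨
    (∀ n ∈ A, |h n (ζ i n)| < |h' n (ζ i n)|)
  cond_xi : ∀ μ : Idx κ, ∀ i, k0 ≤ i → i < k1 → ∀ j < l i, ∀ g ∈ Br i j,
    {n | μ ∈ (g n).support} ∈ p → ∃ c : ℚ, ∀ n ∈ A, g n μ / (K n : ℚ) = c

/-- `𝒜 = 𝒢 ∪ {χ_{→ν_i} : i < k₀}`. -/
def stackA {κ : Cardinal} {p : Ultrafilter ℕ} (S : RationalStack κ p)
    (Gc : Set (ℕ → Gk κ)) : Set (ℕ → Gk κ) :=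
  Gc ∪ {g | ∃ i < S.k0, g = fun _ => chi (S.ν i)}

/-- `𝒞 = (⋃_{i<k₁, j<l_i} 𝓑_{i,j}) / K`. -/
def stackC {κ : Cardinal} {p : Ultrafilter ℕ} (S : RationalStack κ p) : Set (ℕ → Gk κ) :=
  {g | ∃ i < S.k1, ∃ j < S.l i, ∃ h ∈ S.Br i j, g = fun n => ((S.K n : ℚ))⁻¹ • h n}

/-- `(𝒮, 𝒜, 𝒞, 𝓜, 𝓝)` is adapted to `𝒢`. -/
def Adapted {κ : Cardinal} (p : Ultrafilter ℕ) (S : RationalStack κ p)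
    (Gc : Set (ℕ → Gk κ)) (M N : (ℕ → Gk κ) → (ℕ → Gk κ) → ℤ) : Prop :=
  (Submodule.span ℚ {x : Filter.Germ (p : Filter ℕ) (Gk κ) | ∃ f ∈ stackA S Gc, x = germOf p f} =
    Submodule.span ℚ {x : Filter.Germ (p : Filter ℕ) (Gk κ) | ∃ h ∈ stackC S, x = germOf p h}) ∧
  (∀ n ∈ S.A, ∀ f ∈ stackA S Gc, f n = ∑ᶠ h ∈ stackC S, (M f h : ℚ) • h n) ∧
  (∀ n ∈ S.A, ∀ h ∈ stackC S, h n = ((S.T : ℚ) ^ 2)⁻¹ • ∑ᶠ f ∈ stackA S Gc, (N h f : ℚ) • f n) ∧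
  (∀ f ∈ stackA S Gc, IsIntSeq (fun n => (S.K n : ℚ) • f n)) ∧
  (∀ h ∈ stackC S, IsIntSeq (fun n => (S.K n : ℚ) • h n))

/-- Euclidean distance on `𝕋^r`. -/
def euclDist {r : ℕ} (x y : Fin r → Circ) : ℝ := Real.sqrt (∑ i, (dist (x i) (y i)) ^ 2)

-- Auxiliary lemmas


private lemma germ_eq_of_mem {κ : Cardinal} (p : Ultrafilter ℕ) (f h : ℕ → Gk κ)
    (hm : {n | f n = h n} ∈ p) : germOf p f = germOf p h :=
  Filter.Germ.coe_eq.mpr hm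

open Classical in
private lemma selX {X : Type*} {p : Ultrafilter ℕ} (hp : IsSelective p) (f : ℕ → X) :
    (∃ x, {n | f n = x} ∈ p) ∨ ∃ A ∈ p, Set.InjOn f A := by
  by_cases h : ∃ x, {n | f n = x} ∈ p
  · exact Or.inl h
  push_neg at h
  right
  have hex : ∀ n : ℕ, ∃ m, f m = f n := fun n => ⟨n, rfl⟩
  have hespec : ∀ n, f (Nat.find (hex n)) = f n := fun n => Nat.find_spec (hex n)
  have hfib : ∀ k, {n | Nat.find (hex n) = k} ∉ p := by
    intro k hk
    apply h (f k)
    refine Filter.mem_of_superset hk ?_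
    intro n hn
    simp only [Set.mem_setOf_eq] at hn ⊢
    rw [← hespec n, hn]
  obtain ⟨A, hA, hinj⟩ := hp (fun n => Nat.find (hex n)) hfib
  refine ⟨A, hA, fun n hn n' hn' hfe => hinj hn hn' ?_⟩
  have h1 : Nat.find (hex n) ≤ Nat.find (hex n') :=
    Nat.find_le ((hespec n').trans hfe.symm)
  have h2 : Nat.find (hex n') ≤ Nat.find (hex n) :=
    Nat.find_le ((hespec n).trans hfe)
  exact le_antisymm h1 h2

/-- `j` is an active support size. -/
private def activeSz {κ : Cardinal} (g : ℕ → Gk κ) (A : Set ℕ) (j : ℕ) : Prop :=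
  ∃ m ∈ A, g m ≠ 0 ∧ (g m).support.card = j

open Classical in
private noncomputable def repAux {κ : Cardinal} (g : ℕ → Gk κ) (A : Set ℕ) (d : Idx κ) :
    ℕ → Idx κ
  | k =>
    if h : ∃ x : Idx κ, ∃ n ∈ A, g n ≠ 0 ∧ (g n).support.card = k ∧ x ∈ (g n).support ∧
        ∀ j, j < k → activeSz g A j → x ≠ repAux g A d j then
      h.choose
    else d

open Classical in
private lemma repAux_spec {κ : Cardinal} (g : ℕ → Gk κ) (A : Set ℕ) (d : Idx κ)
    (hinj : Set.InjOn (fun n => (g n).support.card) A)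
    {n : ℕ} (hn : n ∈ A) (hg : g n ≠ 0) :
    repAux g A d ((g n).support.card) ∈ (g n).support ∧
      ∀ j, j < (g n).support.card → activeSz g A j →
        repAux g A d ((g n).support.card) ≠ repAux g A d j := by
  set k := (g n).support.card with hk
  have hkpos : 0 < k := Finset.card_pos.mpr (Finsupp.support_nonempty_iff.mpr hg)
  -- the finset of previously chosen values
  set T : Finset (Idx κ) :=
    ((Finset.range k).filter (activeSz g A)).image (repAux g A d) with hT
  have hcard : T.card < k := by
    have h1 : ((Finset.range k).filter (activeSz g A)) ⊆ (Finset.range k).erase 0 := by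
      intro j hj
      rcases Finset.mem_filter.mp hj with ⟨hjr, m, hm, hgm, hcm⟩
      refine Finset.mem_erase.mpr ⟨?_, hjr⟩
      rintro rfl
      exact hgm (Finsupp.support_eq_empty.mp (Finset.card_eq_zero.mp hcm))
    calc T.card ≤ ((Finset.range k).filter (activeSz g A)).card := Finset.card_image_le
      _ ≤ ((Finset.range k).erase 0).card := Finset.card_le_card h1
      _ < k := by
          rw [Finset.card_erase_of_mem (Finset.mem_range.mpr hkpos), Finset.card_range]
          omega
  obtain ⟨x, hxs, hxT⟩ : ∃ x ∈ (g n).support, x ∉ T := by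
    by_contra hc
    push_neg at hc
    have := Finset.card_le_card (fun y hy => hc y hy)
    omega
  have hcond : ∃ x : Idx κ, ∃ n' ∈ A, g n' ≠ 0 ∧ (g n').support.card = k ∧
      x ∈ (g n').support ∧ ∀ j, j < k → activeSz g A j → x ≠ repAux g A d j := by
    refine ⟨x, n, hn, hg, hk.symm, hxs, ?_⟩
    intro j hj hact heq
    exact hxT (heq ▸ Finset.mem_image_of_mem _ (Finset.mem_filter.mpr
      ⟨Finset.mem_range.mpr hj, hact⟩))
  rw [repAux, dif_pos hcond]
  obtain ⟨n', hn', hgn', hcn', hmem, hnot⟩ := hcond.choose_spec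
  have hnn : n' = n := hinj hn' hn (by simpa using hcn')
  subst hnn
  exact ⟨hmem, hnot⟩

private lemma repAux_inj {κ : Cardinal} (g : ℕ → Gk κ) (A : Set ℕ) (d : Idx κ)
    (hinj : Set.InjOn (fun n => (g n).support.card) A)
    {n n' : ℕ} (hn : n ∈ A) (hn' : n' ∈ A) (hg : g n ≠ 0) (hg' : g n' ≠ 0)
    (hlt : (g n').support.card < (g n).support.card) :
    repAux g A d ((g n).support.card) ≠ repAux g A d ((g n').support.card) :=
  (repAux_spec g A d hinj hn hg).2 _ hlt ⟨n', hn', hg', rfl⟩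


/-- Lemma "aux lem". -/
theorem statement14 (κ : Cardinal) (hκ : Cardinal.aleph0 ≤ κ)
    (p : Ultrafilter ℕ) (hp : IsSelective p)
    (Gc : Set (ℕ → Gk κ)) (hGfin : Gc.Finite)
    (hGdist : ∀ f ∈ Gc, ∀ g ∈ Gc, f ≠ g → germOf p f ≠ germOf p g)
    (hGnoconst : ∀ f ∈ Gc, ∀ c : Gk κ, germOf p f ≠ germOf p (fun _ => c))
    (hGind : LinearIndependent ℚ (fun x : Gc ⊕ Idx κ =>
      Sum.elim (fun f : Gc => germOf p f.1) (fun μ : Idx κ => germOf p (fun _ => chi μ)) x)) :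
    (∃ μ : Idx κ, ∃ gs ∈ Gc, ∃ A ∈ p, Set.InjOn (fun n => gs n μ) A) ∨
    (∃ A ∈ p, ∀ g ∈ Gc, ∃ ζg : ℕ → Idx κ,
      (∀ n ∈ A, ζg n ∈ (g n).support) ∧ Set.InjOn ζg A) := by
  classical
  by_cases hfirst : ∃ μ : Idx κ, ∃ gs ∈ Gc, ∃ A ∈ p, Set.InjOn (fun n => gs n μ) A
  · exact Or.inl hfirst
  right
  push_neg at hfirst
  have hd : (0 : Ordinal) < κ.ord := by
    have h0 : (0 : Cardinal) < κ := lt_of_lt_of_le Cardinal.aleph0_pos hκ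
    calc (0 : Ordinal) = (0 : Cardinal).ord := Cardinal.ord_zero.symm
      _ < κ.ord := Cardinal.ord_lt_ord.mpr h0
  set d : Idx κ := ⟨0, hd⟩ with hdd
  have key : ∀ g ∈ Gc, ∃ B ∈ p, ∃ ζ : ℕ → Idx κ,
      (∀ n ∈ B, ζ n ∈ (g n).support) ∧ Set.InjOn ζ B := by
    intro g hg
    have hne : {n | g n ≠ 0} ∈ p := by
      by_contra hcon
      have h0 : {n | g n = (0 : Gk κ)} ∈ p := by
        have hcc := Ultrafilter.compl_mem_iff_notMem.mpr hcon
        convert hcc using 1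
        ext n; simp
      exact hGnoconst g hg 0 (germ_eq_of_mem p g _ h0)
    rcases selX hp (fun n => (g n).support.card) with ⟨k, hk⟩ | ⟨A, hA, hinj⟩
    · -- constant support size k on a p-set
      set B₁ : Set ℕ := {n | (g n).support.card = k} ∩ {n | g n ≠ 0} with hB₁
      have hB₁p : B₁ ∈ p := Filter.inter_mem hk hne
      have hkpos : 0 < k := by
        obtain ⟨n, hn⟩ := Ultrafilter.nonempty_of_mem hB₁p
        have h1 : (g n).support.Nonempty := Finsupp.support_nonempty_iff.mpr hn.2
        have h2 := Finset.card_pos.mpr h1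
        have h3 : (g n).support.card = k := hn.1
        omega
      set ξ : ℕ → ℕ → Idx κ := fun i n => ((g n).support.sort (· ≤ ·)).getD i d with hξ
      have hξmem : ∀ i < k, ∀ n ∈ B₁, ξ i n ∈ (g n).support := by
        intro i hi n hn
        have hlen : ((g n).support.sort (· ≤ ·)).length = k := by
          rw [Finset.length_sort]; exact hn.1
        have hilt : i < ((g n).support.sort (· ≤ ·)).length := by omega
        have hget : ξ i n = ((g n).support.sort (· ≤ ·))[i] :=
          List.getD_eq_getElem _ _ hilt
        rw [hget]
        exact (Finset.mem_sort _).mp (List.getElem_mem hilt)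
      by_cases hcase : ∃ i < k, ∃ A ∈ p, Set.InjOn (ξ i) A
      · obtain ⟨i, hi, A, hA, hinj⟩ := hcase
        exact ⟨A ∩ B₁, Filter.inter_mem hA hB₁p, ξ i,
          fun n hn => hξmem i hi n hn.2, hinj.mono Set.inter_subset_left⟩
      · push_neg at hcase
        exfalso
        have hconst : ∀ i : Fin k, ∃ μ : Idx κ, {n | ξ i.1 n = μ} ∈ p := by
          intro i
          rcases selX hp (ξ i.1) with h | ⟨A, hA, hinj⟩
          · exact h
          · exact absurd hinj (hcase i.1 i.2 A hA)
        choose μf hμf using hconst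
        have hcoord : ∀ i : Fin k, ∃ c : ℚ, {n | g n (μf i) = c} ∈ p := by
          intro i
          rcases selX hp (fun n => g n (μf i)) with h | ⟨A, hA, hinj⟩
          · exact h
          · exact absurd hinj (hfirst (μf i) g hg A hA)
        choose cf hcf using hcoord
        set E : Set ℕ := B₁ ∩ ((⋂ i : Fin k, {n | ξ i.1 n = μf i}) ∩
          ⋂ i : Fin k, {n | g n (μf i) = cf i}) with hE
        have hEp : E ∈ p := Filter.inter_mem hB₁p
          (Filter.inter_mem (Filter.iInter_mem.mpr hμf) (Filter.iInter_mem.mpr hcf))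
        obtain ⟨n₀, hn₀⟩ := Ultrafilter.nonempty_of_mem hEp
        have hsup : ∀ m ∈ E, ∀ μ' ∈ (g m).support, ∃ i : Fin k, μ' = μf i := by
          intro m hm μ' hμ'
          have hlen : ((g m).support.sort (· ≤ ·)).length = k := by
            rw [Finset.length_sort]; exact hm.1.1
          have hmeml : μ' ∈ (g m).support.sort (· ≤ ·) := (Finset.mem_sort _).mpr hμ'
          obtain ⟨j, hjget⟩ := List.mem_iff_get.mp hmeml
          have hjlt : j.1 < k := by have := j.2; omega
          refine ⟨⟨j.1, hjlt⟩, ?_⟩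
          have hxi : ξ j.1 m = μ' := by
            have hlt' : j.1 < ((g m).support.sort (· ≤ ·)).length := by omega
            have h2 : ((g m).support.sort (· ≤ ·))[j.1] = μ' := by
              simpa using hjget
            exact (List.getD_eq_getElem _ _ hlt').trans h2
          have hc : ξ j.1 m = μf ⟨j.1, hjlt⟩ := Set.mem_iInter.mp hm.2.1 ⟨j.1, hjlt⟩
          rw [← hxi, hc]
        have hgeq : ∀ n ∈ E, g n = g n₀ := by
          intro n hn
          apply Finsupp.ext
          intro μ'
          by_cases hex : ∃ i : Fin k, μ' = μf i
          · obtain ⟨i, rfl⟩ := hex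
            have h1 : g n (μf i) = cf i := Set.mem_iInter.mp hn.2.2 i
            have h2 : g n₀ (μf i) = cf i := Set.mem_iInter.mp hn₀.2.2 i
            rw [h1, h2]
          · push_neg at hex
            have h1 : μ' ∉ (g n).support := fun hmem => by
              obtain ⟨i, hi⟩ := hsup n hn μ' hmem; exact hex i hi
            have h2 : μ' ∉ (g n₀).support := fun hmem => by
              obtain ⟨i, hi⟩ := hsup n₀ hn₀ μ' hmem; exact hex i hi
            rw [Finsupp.notMem_support_iff.mp h1, Finsupp.notMem_support_iff.mp h2]
        exact hGnoconst g hg (g n₀)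
          (germ_eq_of_mem p g _ (Filter.mem_of_superset hEp hgeq))
    · -- injective support size on A
      set A' : Set ℕ := A ∩ {n | g n ≠ 0} with hA'
      have hA'p : A' ∈ p := Filter.inter_mem hA hne
      have hinj' : Set.InjOn (fun n => (g n).support.card) A' :=
        hinj.mono Set.inter_subset_left
      refine ⟨A', hA'p, fun n => repAux g A' d ((g n).support.card), ?_, ?_⟩
      · intro n hn
        exact (repAux_spec g A' d hinj' hn hn.2).1
      · intro n hn n' hn' he
        by_contra hnn
        have hsne : (g n).support.card ≠ (g n').support.card :=
          fun hc => hnn (hinj' hn hn' hc)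
        rcases hsne.lt_or_gt with h | h
        · exact repAux_inj g A' d hinj' hn' hn hn'.2 hn.2 h he.symm
        · exact repAux_inj g A' d hinj' hn hn' hn.2 hn'.2 h he
  choose B hB ζf hζf using key
  haveI : Finite ↥Gc := hGfin.to_subtype
  refine ⟨⋂ g : Gc, B g.1 g.2, Filter.iInter_mem.mpr fun g => hB g.1 g.2, ?_⟩
  intro g hg
  refine ⟨ζf g hg, fun n hn => (hζf g hg).1 n ?_, (hζf g hg).2.mono ?_⟩
  · exact Set.mem_iInter.mp hn ⟨g, hg⟩
  · intro n hn
    exact Set.mem_iInter.mp hn ⟨g, hg⟩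

end
end

section
/- If (θ_0, …, θ_{r−1}) is a tuple of real numbers which is linearly independent over ℚ and ε > 0, then there exists a positive integer L such that for every interval I ⊆ ℝ of length at least L, the set {(θ_0·x + ℤ, …, θ_{r−1}·x + ℤ) : x ∈ I} is ε-dense in 𝕋^r with respect to the Euclidean metric. -/
open Filter Topology Set Pointwise

noncomputable section

namespace Kron

open MeasureTheory Complex Submodule Algebra
open scoped Real


abbrev Tor (r : ℕ) : Type := Fin r → Circ

variable {r : ℕ}

/-- Exponential monomials on the torus. -/
def en (n : Fin r → ℤ) : C(Tor r, ℂ) :=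
  ∏ i, (fourier (T := 1) (n i)).comp ⟨fun z => z i, continuous_apply i⟩

lemma en_apply (n : Fin r → ℤ) (z : Tor r) : en n z = ∏ i, fourier (n i) (z i) := by
  simp [en]

lemma en_zero : en (r := r) 0 = 1 := by
  ext z
  simp [en_apply, fourier_zero]

lemma en_mul (n m : Fin r → ℤ) : en n * en m = en (n + m) := by
  ext z
  simp only [ContinuousMap.mul_apply, en_apply, Pi.add_apply, fourier_add]
  rw [← Finset.prod_mul_distrib]

lemma star_en (n : Fin r → ℤ) : star (en n) = en (-n) := by
  ext z
  simp only [ContinuousMap.star_apply, en_apply, Pi.neg_apply, fourier_neg]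
  rw [RCLike.star_def, map_prod]



open Submodule Algebra

/-- The star subalgebra generated by the monomials. -/
def torSubalgebra (r : ℕ) : StarSubalgebra ℂ C(Tor r, ℂ) where
  toSubalgebra := Algebra.adjoin ℂ (Set.range (en (r := r)))
  star_mem' := by
    show Algebra.adjoin ℂ (Set.range (en (r := r))) ≤
      star (Algebra.adjoin ℂ (Set.range (en (r := r))))
    refine adjoin_le ?_
    rintro - ⟨n, rfl⟩
    exact subset_adjoin ⟨-n, (star_en n).symm ▸ (star_star (en (-n))).symm ▸ rfl⟩

theorem torSubalgebra_coe (r : ℕ) :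
    Subalgebra.toSubmodule (torSubalgebra r).toSubalgebra = span ℂ (Set.range (en (r := r))) := by
  apply adjoin_eq_span_of_subset
  refine Subset.trans ?_ Submodule.subset_span
  intro x hx
  refine Submonoid.closure_induction (fun _ => id) ⟨0, en_zero⟩ ?_ hx
  rintro - - - - ⟨m, rfl⟩ ⟨n, rfl⟩
  exact ⟨m + n, (en_mul m n).symm⟩

theorem torSubalgebra_separatesPoints (r : ℕ) : (torSubalgebra r).SeparatesPoints := by
  intro x y hxy
  obtain ⟨i, hi⟩ : ∃ i, x i ≠ y i := by
    by_contra h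
    push_neg at h
    exact hxy (funext h)
  refine ⟨_, ⟨en (Pi.single i 1), subset_adjoin ⟨Pi.single i 1, rfl⟩, rfl⟩, ?_⟩
  have key : ∀ z : Tor r, en (Pi.single i 1) z = AddCircle.toCircle (z i) := by
    intro z
    rw [en_apply, Finset.prod_eq_single i]
    · simp [fourier_apply]
    · intro j _ hj
      simp [Pi.single_eq_of_ne hj, fourier_zero]
    · simp
  dsimp only
  rw [key, key]
  intro h
  have h := Circle.ext h
  exact hi (AddCircle.injective_toCircle one_ne_zero h)

theorem torSubalgebra_closure_eq_top (r : ℕ) : (torSubalgebra r).topologicalClosure = ⊤ :=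
  ContinuousMap.starSubalgebra_topologicalClosure_eq_top_of_separatesPoints _
    (torSubalgebra_separatesPoints r)

theorem span_en_closure_eq_top (r : ℕ) :
    (span ℂ (Set.range (en (r := r)))).topologicalClosure = ⊤ := by
  rw [← torSubalgebra_coe]
  exact congr_arg (Subalgebra.toSubmodule <| StarSubalgebra.toSubalgebra ·)
    (torSubalgebra_closure_eq_top r)

/-- Approximation of any continuous function by a trigonometric polynomial. -/
theorem exists_approx (f : C(Tor r, ℂ)) {δ : ℝ} (hδ : 0 < δ) :
    ∃ c : (Fin r → ℤ) →₀ ℂ, ‖f - c.sum fun n a => a • en n‖ < δ := by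
  have h1 : f ∈ closure ((span ℂ (Set.range (en (r := r)))) : Set C(Tor r, ℂ)) := by
    rw [← Submodule.topologicalClosure_coe, span_en_closure_eq_top]
    trivial
  obtain ⟨P, hP, hPf⟩ := Metric.mem_closure_iff.mp h1 δ hδ
  obtain ⟨c, rfl⟩ := Finsupp.mem_span_range_iff_exists_finsupp.mp hP
  exact ⟨c, by rwa [← dist_eq_norm]⟩



instance : IsProbabilityMeasure (volume : Measure (Tor r)) := by
  constructor
  rw [MeasureTheory.volume_pi, MeasureTheory.Measure.pi_univ]
  simp [AddCircle.measure_univ]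

lemma cm_integrable (g : C(Tor r, ℂ)) : Integrable g (volume : Measure (Tor r)) :=
  g.continuous.integrable_of_hasCompactSupport (HasCompactSupport.of_compactSpace _)

lemma integral_fourier_eq (k : ℤ) :
    (∫ x : Circ, fourier k x) = if k = 0 then 1 else 0 := by
  split_ifs with h
  · subst h
    have : ∀ x : Circ, fourier 0 x = 1 := fun x => fourier_zero
    rw [integral_congr_ae (Eventually.of_forall this)]
    simp [Measure.real, AddCircle.measure_univ]
  · exact integral_eq_zero_of_add_right_eq_neg
      (fourier_add_half_inv_index h one_pos)

lemma integral_en (n : Fin r → ℤ) :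
    (∫ z : Tor r, en n z) = if n = 0 then 1 else 0 := by
  have h1 : (∫ z : Tor r, en n z) = ∏ i, ∫ x : Circ, fourier (n i) x := by
    rw [← MeasureTheory.integral_fintype_prod_eq_prod (ι := Fin r)
      (f := fun i (x : Circ) => (fourier (n i) x : ℂ))]
    exact integral_congr_ae (Eventually.of_forall fun z => en_apply n z)
  rw [h1]
  split_ifs with h
  · refine Finset.prod_eq_one fun i _ => ?_
    rw [integral_fourier_eq, if_pos (by simp [h])]
  · obtain ⟨i, hi⟩ : ∃ i, n i ≠ 0 := by
      by_contra hc
      push_neg at hc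
      exact h (funext hc)
    exact Finset.prod_eq_zero (Finset.mem_univ i) (by rw [integral_fourier_eq, if_neg hi])

lemma integral_trigPoly (c : (Fin r → ℤ) →₀ ℂ) :
    (∫ z : Tor r, (c.sum fun n a => a • en n) z) = c 0 := by
  have h1 : ∀ z : Tor r, (c.sum fun n a => a • en n) z = ∑ n ∈ c.support, c n * en n z := by
    intro z
    rw [Finsupp.sum, ContinuousMap.sum_apply]
    simp
  rw [integral_congr_ae (Eventually.of_forall h1),
    integral_finset_sum _ (fun n _ => (cm_integrable (en n)).const_mul (c n))]
  have h2 : ∀ n ∈ c.support, (∫ z : Tor r, c n * en n z) = if n = 0 then c n else 0 := by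
    intro n _
    rw [MeasureTheory.integral_const_mul, integral_en]
    simp [mul_ite]
  rw [Finset.sum_congr rfl h2, Finset.sum_ite_eq' c.support 0 c]
  split_ifs with h
  · rfl
  · exact (Finsupp.notMem_support_iff.mp h).symm



/-- The linear flow on the torus. -/
def phi (θ : Fin r → ℝ) (t : ℝ) : Tor r := fun i => ((θ i * t : ℝ) : Circ)

lemma continuous_phi (θ : Fin r → ℝ) : Continuous (phi θ) :=
  continuous_pi fun i =>
    (AddCircle.continuous_mk' 1).comp (continuous_const.mul continuous_id)

lemma en_phi (θ : Fin r → ℝ) (n : Fin r → ℤ) (t : ℝ) :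
    en n (phi θ t) = Complex.exp ((((2 * π * ∑ i, (n i : ℝ) * θ i : ℝ) : ℂ) * I) * t) := by
  rw [en_apply]
  have h1 : ∀ i, fourier (n i) (phi θ t i) = Complex.exp (2 * π * I * (n i) * (θ i * t) / 1) := by
    intro i
    show fourier (n i) ((θ i * t : ℝ) : Circ) = _
    rw [fourier_coe_apply (T := 1) (n := n i) (x := θ i * t)]
    push_cast
    ring_nf
  rw [Finset.prod_congr rfl (fun i _ => h1 i), ← Complex.exp_sum]
  congr 1
  push_cast
  rw [Finset.mul_sum, Finset.sum_mul, Finset.sum_mul]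
  refine Finset.sum_congr rfl fun i _ => by ring

lemma sum_ne_zero {θ : Fin r → ℝ} (hθ : LinearIndependent ℚ θ) {n : Fin r → ℤ}
    (hn : n ≠ 0) : (∑ i, (n i : ℝ) * θ i) ≠ 0 := by
  intro h
  have h2 : ∑ i, (n i : ℚ) • θ i = 0 := by
    rw [← h]
    refine Finset.sum_congr rfl fun i _ => ?_
    rw [Rat.smul_def]
    push_cast
    ring
  have := Fintype.linearIndependent_iff.mp hθ (fun i => (n i : ℚ)) h2
  refine hn (funext fun i => ?_)
  have h3 : (n i : ℚ) = 0 := this i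
  have h4 : n i = 0 := by exact_mod_cast h3
  simp [h4]

lemma intervalIntegral_en_zero (θ : Fin r → ℝ) (T : ℝ) :
    (∫ t in (0:ℝ)..T, en 0 (phi θ t)) = (T : ℂ) := by
  have : ∀ t : ℝ, en (0 : Fin r → ℤ) (phi θ t) = 1 := by
    intro t; rw [en_zero]; rfl
  simp only [this]
  simp

lemma norm_intervalIntegral_en_le (θ : Fin r → ℝ) {n : Fin r → ℤ}
    (ha : (2 * π * ∑ i, (n i : ℝ) * θ i) ≠ 0) (T : ℝ) :
    ‖∫ t in (0:ℝ)..T, en n (phi θ t)‖ ≤ 2 / |2 * π * ∑ i, (n i : ℝ) * θ i| := by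
  set a : ℝ := 2 * π * ∑ i, (n i : ℝ) * θ i with ha_def
  have hc : ((a : ℂ)) * I ≠ 0 := by
    simp [Complex.ofReal_ne_zero.mpr ha, Complex.I_ne_zero]
  have h1 : ∀ t : ℝ, en n (phi θ t) = Complex.exp ((((a : ℝ) : ℂ) * I) * t) :=
    fun t => en_phi θ n t
  simp only [h1]
  rw [integral_exp_mul_complex hc]
  have hnorm : ∀ t : ℝ, ‖Complex.exp ((((a : ℝ) : ℂ) * I) * t)‖ = 1 := by
    intro t
    rw [Complex.norm_exp]
    have : ((((a : ℝ) : ℂ) * I) * t).re = 0 := by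
      simp [Complex.mul_re]
    rw [this, Real.exp_zero]
  rw [norm_div]
  have h2 : ‖Complex.exp (((a : ℝ) : ℂ) * I * T) - Complex.exp (((a : ℝ) : ℂ) * I * 0)‖ ≤ 2 := by
    refine (norm_sub_le _ _).trans ?_
    rw [hnorm T]
    have := hnorm 0
    push_cast at this
    rw [this]
    norm_num
  have h3 : ‖((a : ℝ) : ℂ) * I‖ = |a| := by
    rw [norm_mul, Complex.norm_I, Complex.norm_real, Real.norm_eq_abs,
      mul_one]
  rw [h3]
  exact (div_le_div_iff_of_pos_right (abs_pos.mpr ha)).mpr h2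



lemma trigPoly_apply (c : (Fin r → ℤ) →₀ ℂ) (z : Tor r) :
    (c.sum fun n a => a • en n) z = ∑ n ∈ c.support, c n * en n z := by
  rw [Finsupp.sum, ContinuousMap.sum_apply]
  simp

set_option maxHeartbeats 1000000 in
theorem dense_phi {θ : Fin r → ℝ} (hθ : LinearIndependent ℚ θ) :
    Dense (Set.range (phi θ)) := by
  by_contra hd
  rw [Metric.dense_iff] at hd
  push_neg at hd
  obtain ⟨y, ε₀, hε₀, hball⟩ := hd
  have hfar : ∀ t : ℝ, ε₀ ≤ dist (phi θ t) y := by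
    intro t
    by_contra hlt
    push_neg at hlt
    have : phi θ t ∈ Metric.ball y ε₀ ∩ Set.range (phi θ) :=
      ⟨Metric.mem_ball.mpr hlt, ⟨t, rfl⟩⟩
    exact Set.not_nonempty_iff_eq_empty.mpr hball ⟨_, this⟩
  -- the bump function
  set g : Tor r → ℝ := fun z => max (1 - dist z y / ε₀) 0 with hg_def
  have hg_cont : Continuous g :=
    (continuous_const.sub ((continuous_id.dist continuous_const).div_const ε₀)).max
      continuous_const
  have hg_nonneg : ∀ z, 0 ≤ g z := fun z => le_max_right _ _
  have hg_int : Integrable g (volume : Measure (Tor r)) :=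
    hg_cont.integrable_of_hasCompactSupport (HasCompactSupport.of_compactSpace _)
  set m : ℝ := ∫ z : Tor r, g z with hm_def
  have hm_pos : 0 < m := by
    rw [hm_def, integral_pos_iff_support_of_nonneg hg_nonneg hg_int]
    refine lt_of_lt_of_le (Metric.measure_ball_pos volume y hε₀) (measure_mono ?_)
    intro z hz
    rw [Metric.mem_ball] at hz
    have : 0 < 1 - dist z y / ε₀ := by
      rw [sub_pos, div_lt_one hε₀]
      exact hz
    exact fun h0 => by simp only [hg_def] at h0; rw [max_eq_left this.le] at h0; linarith
  set f : C(Tor r, ℂ) := ⟨fun z => ((g z : ℝ) : ℂ), Complex.continuous_ofReal.comp hg_cont⟩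
    with hf_def
  have hfphi : ∀ t : ℝ, f (phi θ t) = 0 := by
    intro t
    have h1 : 1 - dist (phi θ t) y / ε₀ ≤ 0 := by
      rw [sub_nonpos, le_div_iff₀ hε₀, one_mul]
      exact hfar t
    simp only [hf_def, ContinuousMap.coe_mk, hg_def]
    rw [max_eq_right h1]
    simp
  set δ : ℝ := m / 4 with hδ_def
  have hδ_pos : 0 < δ := by rw [hδ_def]; linarith
  obtain ⟨c, hc⟩ := exists_approx f hδ_pos
  set P : C(Tor r, ℂ) := c.sum fun n a => a • en n with hP_def
  have hpt : ∀ z : Tor r, ‖f z - P z‖ ≤ ‖f - P‖ := by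
    intro z
    exact (ContinuousMap.norm_coe_le_norm (f - P) z)
  -- space estimate
  have hintf : (∫ z : Tor r, f z) = ((m : ℝ) : ℂ) := by
    simp only [hf_def, ContinuousMap.coe_mk]
    rw [hm_def]; exact integral_ofReal
  have hintP : (∫ z : Tor r, P z) = c 0 := integral_trigPoly c
  have hspace : ‖((m : ℝ) : ℂ) - c 0‖ ≤ ‖f - P‖ := by
    rw [← hintf, ← hintP, ← integral_sub (cm_integrable f) (cm_integrable P)]
    calc ‖∫ z : Tor r, (f z - P z)‖ ≤ ‖f - P‖ * (volume (Set.univ : Set (Tor r))).toReal :=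
          norm_integral_le_of_norm_le_const (Eventually.of_forall fun z => hpt z)
      _ = ‖f - P‖ := by simp
  have hc0 : 3 * δ ≤ ‖c 0‖ := by
    have h1 : ‖((m : ℝ) : ℂ)‖ = m := by
      rw [Complex.norm_real, Real.norm_eq_abs, abs_of_pos hm_pos]
    have h2 : ‖((m : ℝ) : ℂ)‖ - ‖((m : ℝ) : ℂ) - c 0‖ ≤ ‖c 0‖ := by
      have := norm_sub_norm_le ((m : ℝ) : ℂ) (c 0)
      linarith [norm_sub_norm_le ((m : ℝ) : ℂ) (c 0)]
    rw [h1] at h2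
    have : m - δ ≤ ‖c 0‖ := le_trans (by linarith [le_trans hspace hc.le]) h2
    have hm4 : m = 4 * δ := by rw [hδ_def]; ring
    linarith
  -- time estimate
  set B : ℝ := ∑ n ∈ c.support.erase 0, ‖c n‖ * (2 / |2 * π * ∑ i, (n i : ℝ) * θ i|)
    with hB_def
  have hB_nonneg : 0 ≤ B := by
    refine Finset.sum_nonneg fun n _ => ?_
    positivity
  have htime : ∀ T : ℝ, 0 < T → ‖c 0‖ * T ≤ δ * T + B := by
    intro T hT
    have hint : ∀ n : Fin r → ℤ, IntervalIntegrable (fun t => en n (phi θ t)) volume 0 T :=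
      fun n => ((en n).continuous.comp (continuous_phi θ)).intervalIntegrable 0 T
    have hsplit : (∫ t in (0:ℝ)..T, P (phi θ t)) =
        ∑ n ∈ c.support, c n * ∫ t in (0:ℝ)..T, en n (phi θ t) := by
      have h1 : ∀ t : ℝ, P (phi θ t) = ∑ n ∈ c.support, c n * en n (phi θ t) :=
        fun t => trigPoly_apply c (phi θ t)
      simp only [h1]
      rw [intervalIntegral.integral_finset_sum fun n _ => (hint n).const_mul (c n)]
      exact Finset.sum_congr rfl fun n _ => intervalIntegral.integral_const_mul _ _
    have hdecomp : (∫ t in (0:ℝ)..T, P (phi θ t)) =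
        c 0 * T + ∑ n ∈ c.support.erase 0, c n * ∫ t in (0:ℝ)..T, en n (phi θ t) := by
      rw [hsplit]
      by_cases h0 : (0 : Fin r → ℤ) ∈ c.support
      · rw [← Finset.add_sum_erase _ _ h0, intervalIntegral_en_zero]
      · rw [Finset.erase_eq_of_notMem h0, Finsupp.notMem_support_iff.mp h0]
        simp
    have hbound : ‖∑ n ∈ c.support.erase 0, c n * ∫ t in (0:ℝ)..T, en n (phi θ t)‖ ≤ B := by
      refine (norm_sum_le _ _).trans ?_
      rw [hB_def]
      refine Finset.sum_le_sum fun n hn => ?_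
      rw [norm_mul]
      refine mul_le_mul_of_nonneg_left ?_ (norm_nonneg _)
      have hn0 : n ≠ 0 := Finset.ne_of_mem_erase hn
      have ha : (2 * π * ∑ i, (n i : ℝ) * θ i) ≠ 0 := by
        refine mul_ne_zero (mul_ne_zero two_ne_zero Real.pi_ne_zero) (sum_ne_zero hθ hn0)
      exact norm_intervalIntegral_en_le θ ha T
    have hPsmall : ‖∫ t in (0:ℝ)..T, P (phi θ t)‖ ≤ δ * T := by
      have h1 : ∀ t ∈ Set.uIoc (0:ℝ) T, ‖P (phi θ t)‖ ≤ δ := by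
        intro t _
        have : ‖P (phi θ t)‖ = ‖f (phi θ t) - P (phi θ t)‖ := by
          rw [hfphi t, zero_sub, norm_neg]
        rw [this]
        exact (hpt _).trans hc.le
      calc ‖∫ t in (0:ℝ)..T, P (phi θ t)‖ ≤ δ * |T - 0| :=
            intervalIntegral.norm_integral_le_of_norm_le_const h1
        _ = δ * T := by rw [sub_zero, abs_of_pos hT]
    have : ‖c 0 * T‖ ≤ δ * T + B := by
      have h2 : c 0 * T = (∫ t in (0:ℝ)..T, P (phi θ t)) -
          ∑ n ∈ c.support.erase 0, c n * ∫ t in (0:ℝ)..T, en n (phi θ t) := by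
        rw [hdecomp]; ring
      rw [h2]
      exact (norm_sub_le _ _).trans (add_le_add hPsmall hbound)
    calc ‖c 0‖ * T = ‖c 0 * T‖ := by
          rw [norm_mul, Complex.norm_real, Real.norm_eq_abs, abs_of_pos hT]
      _ ≤ δ * T + B := this
  -- contradiction
  set T : ℝ := (B + 1) / δ with hT_def
  have hT_pos : 0 < T := div_pos (by linarith) hδ_pos
  have h1 : 3 * δ * T ≤ δ * T + B := le_trans (mul_le_mul_of_nonneg_right hc0 hT_pos.le)
    (htime T hT_pos)
  have h2 : δ * T = B + 1 := by
    rw [hT_def, mul_div_cancel₀ _ (ne_of_gt hδ_pos)]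
  nlinarith [hδ_pos, hB_nonneg]



lemma phi_add (θ : Fin r → ℝ) (s t : ℝ) : phi θ (s + t) = phi θ s + phi θ t := by
  funext i
  show ((θ i * (s + t) : ℝ) : Circ) = ((θ i * s : ℝ) : Circ) + ((θ i * t : ℝ) : Circ)
  rw [mul_add]
  push_cast
  rfl



end Kron

/-- Lemma "dense.torus", an application of Kronecker's lemma. -/
theorem statement15 (r : ℕ) (θ : Fin r → ℝ) (hθ : LinearIndependent ℚ θ)
    (ε : ℝ) (hε : 0 < ε) :
    ∃ L : ℕ, 0 < L ∧ ∀ a b : ℝ, (L : ℝ) ≤ b - a →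
      ∀ y : Fin r → Circ, ∃ x ∈ Set.Ioo a b,
        euclDist (fun i => toCirc (θ i * x)) y < ε := by
  classical
  have hdense := Kron.dense_phi hθ
  set ε' : ℝ := ε / (Real.sqrt r + 1) with hε'_def
  have hsr : 0 ≤ Real.sqrt r := Real.sqrt_nonneg r
  have hε' : 0 < ε' := div_pos hε (by linarith)
  have hcover : (Set.univ : Set (Kron.Tor r)) ⊆
      ⋃ t : ℝ, Metric.ball (Kron.phi θ t) ε' := by
    intro y _
    obtain ⟨z, hz, hdist⟩ := Metric.mem_closure_iff.mp (hdense y) ε' hε'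
    obtain ⟨t, rfl⟩ := hz
    exact Set.mem_iUnion.mpr ⟨t, Metric.mem_ball.mpr hdist⟩
  obtain ⟨s, hs⟩ := isCompact_univ.elim_finite_subcover
    (fun t : ℝ => Metric.ball (Kron.phi θ t) ε') (fun t => Metric.isOpen_ball) hcover
  have hsne : s.Nonempty := by
    obtain ⟨t, ht, -⟩ := Set.mem_iUnion₂.mp (hs (Set.mem_univ (0 : Kron.Tor r)))
    exact ⟨t, ht⟩
  set B : ℝ := s.sup' hsne (fun t => |t|) with hB_def
  have hB_nonneg : 0 ≤ B := le_trans (abs_nonneg _) (Finset.le_sup' _ hsne.choose_spec)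
  refine ⟨⌈2 * B⌉₊ + 1, Nat.succ_pos _, fun a b hab y => ?_⟩
  have hL : 2 * B + 1 ≤ b - a := by
    have h1 : 2 * B ≤ (⌈2 * B⌉₊ : ℝ) := Nat.le_ceil _
    have h2 : ((⌈2 * B⌉₊ + 1 : ℕ) : ℝ) = (⌈2 * B⌉₊ : ℝ) + 1 := by push_cast; ring
    rw [h2] at hab
    linarith
  set cc : ℝ := (a + b) / 2 with hcc_def
  obtain ⟨t, ht, htball⟩ := Set.mem_iUnion₂.mp
    (hs (Set.mem_univ (y - Kron.phi θ cc)))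
  have htB : |t| ≤ B := Finset.le_sup' _ ht
  obtain ⟨htl, htu⟩ := abs_le.mp htB
  refine ⟨cc + t, ⟨by rw [hcc_def]; linarith, by rw [hcc_def]; linarith⟩, ?_⟩
  have hkey : ∀ i, dist ((θ i * (cc + t) : ℝ) : Circ) (y i) < ε' := by
    intro i
    have h1 : Kron.phi θ (cc + t) i = Kron.phi θ cc i + Kron.phi θ t i := by
      rw [Kron.phi_add]; rfl
    have h2 : dist (Kron.phi θ (cc + t) i) (y i) =
        dist ((y - Kron.phi θ cc) i) (Kron.phi θ t i) := by
      rw [h1, dist_eq_norm, dist_eq_norm]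
      rw [show Kron.phi θ cc i + Kron.phi θ t i - y i
        = -((y - Kron.phi θ cc) i - Kron.phi θ t i) by simp; abel, norm_neg]
    show dist (Kron.phi θ (cc + t) i) (y i) < ε'
    rw [h2]
    exact lt_of_le_of_lt (dist_le_pi_dist _ _ i) (Metric.mem_ball.mp htball)
  have h3 : ∑ i, (dist ((θ i * (cc + t) : ℝ) : Circ) (y i)) ^ 2 ≤ r * ε' ^ 2 := by
    calc ∑ i, (dist ((θ i * (cc + t) : ℝ) : Circ) (y i)) ^ 2
        ≤ ∑ _i : Fin r, ε' ^ 2 :=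
          Finset.sum_le_sum fun i _ => pow_le_pow_left₀ dist_nonneg (hkey i).le 2
      _ = r * ε' ^ 2 := by rw [Finset.sum_const, Finset.card_univ, Fintype.card_fin,
          nsmul_eq_mul]
  calc euclDist (fun i => ((θ i * (cc + t) : ℝ) : Circ)) y
      ≤ Real.sqrt (r * ε' ^ 2) := Real.sqrt_le_sqrt h3
    _ = Real.sqrt r * ε' := by
        rw [Real.sqrt_mul (Nat.cast_nonneg r), Real.sqrt_sq hε'.le]
    _ < ε := by
        rw [hε'_def]
        rw [mul_div_assoc', div_lt_iff₀ (by linarith)]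
        nlinarith

end
end

section
/- Fix a positive real ε* < 1/8. Let θ = (θ_0, …, θ_{r−1}) be a tuple of real numbers linearly independent over ℚ, and let L be a positive integer such that for every interval I ⊆ ℝ of length at least L, the set {(θ_0·x + ℤ, …, θ_{r−1}·x + ℤ) : x ∈ I} is ε*-dense in 𝕋^r. Let (a_0, …, a_{r−1}) be integers such that: (i) |a_0| > … > |a_{r−1}|; and (ii) |θ_k − a_k/a_0| < ε*/(√r·L) for each k < r. Then: (a) for any arc J of 𝕋 of length at least L/|a_0|, the set {(a_0·x, …, a_{r−1}·x) : x ∈ J} is 2ε*-dense in 𝕋^r; and (b) for any arc J of 𝕋 of length at least 3L/|a_0| and any open ball 𝒰 ⊆ 𝕋^r of radius 4ε* (in the Euclidean metric), there exists an arc K ⊆ J of length 4ε*/(√r·|a_0|) such that {(a_0·x, …, a_{r−1}·x) : x ∈ K} ⊆ 𝒰. -/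
open Filter Topology Set Pointwise

noncomputable section

lemma toCirc_add (u v : ℝ) : toCirc (u + v) = toCirc u + toCirc v := rfl

lemma dist_toCirc_le (u v : ℝ) : dist (toCirc u) (toCirc v) ≤ |u - v| := by
  have h : toCirc u - toCirc v = toCirc (u - v) := rfl
  rw [dist_eq_norm, h]
  have := UnitAddCircle.norm_eq (x := u - v)
  rw [show ‖toCirc (u - v)‖ = ‖((u - v : ℝ) : UnitAddCircle)‖ from rfl, this]
  simpa using round_le (u - v) 0

lemma zsmul_toCirc (n : ℤ) (t : ℝ) : n • toCirc t = toCirc ((n : ℝ) * t) := by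
  show n • ((t : ℝ) : AddCircle (1:ℝ)) = _
  rw [← AddCircle.coe_zsmul]
  norm_num [toCirc, zsmul_eq_mul]

lemma euclDist_le {r : ℕ} {x y : Fin r → Circ} {c : ℝ} (hc : 0 ≤ c)
    (h : ∀ i, dist (x i) (y i) ≤ c) : euclDist x y ≤ Real.sqrt r * c := by
  unfold euclDist
  have hsum : (∑ i, dist (x i) (y i) ^ 2) ≤ ∑ _i : Fin r, c ^ 2 :=
    Finset.sum_le_sum fun i _ => pow_le_pow_left₀ dist_nonneg (h i) 2
  calc Real.sqrt (∑ i, dist (x i) (y i) ^ 2) ≤ Real.sqrt (r * c ^ 2) :=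
        Real.sqrt_le_sqrt (by simpa using hsum)
    _ = Real.sqrt r * c := by
        rw [Real.sqrt_mul (by positivity), Real.sqrt_sq hc]

lemma dist_le_euclDist {r : ℕ} (x y : Fin r → Circ) (i : Fin r) :
    dist (x i) (y i) ≤ euclDist x y := by
  unfold euclDist
  rw [show dist (x i) (y i) = Real.sqrt (dist (x i) (y i) ^ 2) by rw [Real.sqrt_sq dist_nonneg]]
  exact Real.sqrt_le_sqrt (Finset.single_le_sum (f := fun j => dist (x j) (y j) ^ 2)
    (fun j _ => sq_nonneg _) (Finset.mem_univ i))

lemma euclDist_triangle {r : ℕ} (x y z : Fin r → Circ) :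
    euclDist x z ≤ euclDist x y + euclDist y z := by
  have h1 : euclDist x z ≤ Real.sqrt (∑ i, (dist (x i) (y i) + dist (y i) (z i)) ^ 2) := by
    apply Real.sqrt_le_sqrt
    apply Finset.sum_le_sum
    intro i _
    exact pow_le_pow_left₀ dist_nonneg (dist_triangle (x i) (y i) (z i)) 2
  refine h1.trans ?_
  have key := norm_add_le (E := EuclideanSpace ℝ (Fin r))
    (WithLp.toLp 2 (fun i => dist (x i) (y i)) : EuclideanSpace ℝ (Fin r))
    (WithLp.toLp 2 (fun i => dist (y i) (z i)) : EuclideanSpace ℝ (Fin r))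
  rw [EuclideanSpace.norm_eq, EuclideanSpace.norm_eq, EuclideanSpace.norm_eq] at key
  simp only [Real.norm_eq_abs, sq_abs, PiLp.add_apply, PiLp.toLp_apply] at key
  unfold euclDist
  convert key using 3

set_option maxHeartbeats 1000000 in
/-- Lemma "lem.kronecker". -/
theorem statement16 (εs : ℝ) (hεs0 : 0 < εs) (hεs : εs < 1 / 8)
    (r : ℕ) (hr : 0 < r) (θ : Fin r → ℝ) (hθ : LinearIndependent ℚ θ)
    (L : ℕ) (hL : 0 < L)
    (hLdense : ∀ a b : ℝ, (L : ℝ) ≤ b - a → ∀ y : Fin r → Circ,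
      ∃ x ∈ Set.Ioo a b, euclDist (fun i => toCirc (θ i * x)) y < εs)
    (a : Fin r → ℤ)
    (hmono : ∀ k k' : Fin r, k < k' → |a k'| < |a k|)
    (happrox : ∀ k : Fin r, |θ k - (a k : ℝ) / (a ⟨0, hr⟩ : ℝ)| < εs / (Real.sqrt r * L)) :
    -- (a)
    (∀ c len : ℝ, (L : ℝ) / |(a ⟨0, hr⟩ : ℝ)| ≤ len →
      ∀ y : Fin r → Circ, ∃ t ∈ Set.Ioo c (c + len),
        euclDist (fun k => a k • toCirc t) y < 2 * εs) ∧
    -- (b)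
    (∀ c len : ℝ, 3 * (L : ℝ) / |(a ⟨0, hr⟩ : ℝ)| ≤ len →
      ∀ u : Fin r → Circ, ∃ c' : ℝ,
        arcOf c' (4 * εs / (Real.sqrt r * |(a ⟨0, hr⟩ : ℝ)|)) ⊆ arcOf c len ∧
        ∀ t ∈ Set.Ioo c' (c' + 4 * εs / (Real.sqrt r * |(a ⟨0, hr⟩ : ℝ)|)),
          euclDist (fun k => a k • toCirc t) u < 4 * εs) := by
  have hsr : (1:ℝ) ≤ Real.sqrt r := by
    rw [show (1:ℝ) = Real.sqrt 1 by simp]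
    exact Real.sqrt_le_sqrt (by exact_mod_cast hr)
  have hsr0 : (0:ℝ) < Real.sqrt r := by linarith
  have hL1 : (1:ℝ) ≤ (L:ℝ) := by exact_mod_cast hL
  have hLpos : (0:ℝ) < (L:ℝ) := by linarith
  set i0 : Fin r := ⟨0, hr⟩ with hi0
  -- a₀ ≠ 0
  have ha0 : a i0 ≠ 0 := by
    intro h0
    have hθ0 : |θ i0| < εs / (L:ℝ) := by
      have h1 := happrox i0
      rw [h0] at h1
      simp only [Int.cast_zero, zero_div, div_zero, sub_zero] at h1
      refine h1.trans_le ?_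
      apply div_le_div_of_nonneg_left hεs0.le hLpos
      nlinarith
    obtain ⟨x, hx, hd⟩ := hLdense 0 L (by simp) (fun _ => toCirc (1/2))
    have h1 : dist (toCirc (θ i0 * x)) (toCirc (1/2)) < εs := by
      have h := dist_le_euclDist (fun i => toCirc (θ i * x)) (fun _ => toCirc (1/2)) i0
      exact lt_of_le_of_lt h hd
    have h2 : dist (toCirc 0) (toCirc (θ i0 * x)) < εs := by
      refine lt_of_le_of_lt (dist_toCirc_le _ _) ?_
      rw [zero_sub, abs_neg, abs_mul]
      have hxL : |x| ≤ (L:ℝ) := by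
        rw [abs_of_pos hx.1]; exact hx.2.le
      calc |θ i0| * |x| ≤ |θ i0| * L := by
            exact mul_le_mul_of_nonneg_left hxL (abs_nonneg _)
        _ < (εs / L) * L := by
            exact mul_lt_mul_of_pos_right hθ0 hLpos
        _ = εs := by field_simp
    have h4 : dist (toCirc (0:ℝ)) (toCirc (1/2)) = 1/2 := by
      rw [dist_eq_norm]
      have : toCirc (0:ℝ) - toCirc (1/2) = toCirc (0 - 1/2) := rfl
      rw [this]
      rw [show ‖toCirc (0 - 1/2 : ℝ)‖ = ‖((0 - 1/2 : ℝ) : UnitAddCircle)‖ from rfl,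
        UnitAddCircle.norm_eq]
      norm_num [round_eq]
    have := dist_triangle (toCirc (0:ℝ)) (toCirc (θ i0 * x)) (toCirc (1/2))
    rw [h4] at this
    linarith
  have hA0 : (0:ℝ) < |(a i0 : ℝ)| := abs_pos.mpr (Int.cast_ne_zero.mpr ha0)
  set A0 : ℝ := |(a i0 : ℝ)| with hA0def
  set a0 : ℝ := (a i0 : ℝ) with ha0def
  have ha0ne : a0 ≠ 0 := Int.cast_ne_zero.mpr ha0
  have parta : ∀ c len : ℝ, (L:ℝ)/A0 ≤ len → ∀ y : Fin r → Circ,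
      ∃ t ∈ Set.Ioo c (c+len), euclDist (fun k => a k • toCirc t) y < 2*εs := by
    intro c len hlen y
    set s0 : ℝ := if 0 < a0 then 0 else -L with hs0def
    obtain ⟨x, hx, hd⟩ := hLdense s0 (s0 + L) (by simp)
      (fun k => y k - toCirc ((a k : ℝ) * c))
    have hfacts : 0 < x / a0 ∧ x / a0 < (L:ℝ) / A0 ∧ |x| ≤ (L:ℝ) := by
      rcases lt_or_gt_of_ne ha0ne with hneg | hpos
      · have hs0 : s0 = -L := if_neg (not_lt.mpr hneg.le)
        rw [hs0] at hx
        have hx1 : -(L:ℝ) < x := hx.1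
        have hx2 : x < 0 := by have := hx.2; linarith
        refine ⟨div_pos_of_neg_of_neg hx2 hneg, ?_, ?_⟩
        · rw [hA0def, abs_of_neg hneg, show x / a0 = (-x) / (-a0) by ring]
          exact div_lt_div_of_pos_right (by linarith) (by linarith)
        · rw [abs_of_neg hx2]; linarith
      · have hs0 : s0 = 0 := if_pos hpos
        rw [hs0] at hx
        have hx1 : 0 < x := hx.1
        have hx2 : x < L := by have := hx.2; linarith
        refine ⟨div_pos hx1 hpos, ?_, ?_⟩
        · rw [hA0def, abs_of_pos hpos]
          exact div_lt_div_of_pos_right hx2 hpos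
        · rw [abs_of_pos hx1]; linarith
    obtain ⟨hu1, hu2, hxL⟩ := hfacts
    set t : ℝ := c + x / a0 with ht
    refine ⟨t, ⟨by rw [ht]; linarith, by rw [ht]; linarith⟩, ?_⟩
    set w : Fin r → Circ := fun k => toCirc ((a k:ℝ) * c + θ k * x) with hw
    have h1 : euclDist (fun k => a k • toCirc t) w ≤ Real.sqrt r * (εs / Real.sqrt r) := by
      apply euclDist_le (by positivity)
      intro k
      show dist (a k • toCirc t) (w k) ≤ _
      rw [hw, zsmul_toCirc]
      refine (dist_toCirc_le _ _).trans ?_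
      have he : (a k:ℝ) * t - ((a k:ℝ)*c + θ k * x) = ((a k:ℝ)/a0 - θ k) * x := by
        rw [ht]; field_simp; ring
      rw [he, abs_mul]
      have h5 : |(a k:ℝ)/a0 - θ k| ≤ εs / (Real.sqrt r * L) := by
        rw [abs_sub_comm]; exact (happrox k).le
      calc |(a k:ℝ)/a0 - θ k| * |x| ≤ (εs/(Real.sqrt r * L)) * L :=
            mul_le_mul h5 hxL (abs_nonneg _) (by positivity)
        _ = εs / Real.sqrt r := by field_simp
    have h1' : Real.sqrt r * (εs / Real.sqrt r) = εs := by field_simp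
    have h2 : euclDist w y
        = euclDist (fun k => toCirc (θ k * x)) (fun k => y k - toCirc ((a k:ℝ) * c)) := by
      unfold euclDist
      congr 1
      apply Finset.sum_congr rfl
      intro k _
      congr 1
      have hwk : w k = toCirc ((a k:ℝ)*c) + toCirc (θ k * x) := by
        rw [hw]; exact toCirc_add _ _
      have hyk : y k = toCirc ((a k:ℝ)*c) + (y k - toCirc ((a k:ℝ)*c)) := by abel
      rw [hwk]
      conv_lhs => rw [hyk]
      exact dist_add_left _ _ _
    calc euclDist (fun k => a k • toCirc t) y
        ≤ euclDist (fun k => a k • toCirc t) w + euclDist w y := euclDist_triangle _ _ _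
      _ < εs + εs := add_lt_add_of_le_of_lt (h1.trans_eq h1') (h2 ▸ hd)
      _ = 2*εs := by ring
  refine ⟨parta, ?_⟩
  intro c len hlen u
  set δ : ℝ := 4*εs/(Real.sqrt r * A0) with hδ
  have hδpos : 0 < δ := by positivity
  have hLA : 0 < (L:ℝ)/A0 := by positivity
  have hlen3 : (L:ℝ)/A0 ≤ len/3 := by
    rw [show 3*(L:ℝ)/A0 = 3*((L:ℝ)/A0) by ring] at hlen
    linarith
  obtain ⟨t0, ht0, hd0⟩ := parta (c + len/3) (len/3) hlen3 u
  have hδhalf : δ/2 ≤ (L:ℝ)/A0 := by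
    have key : 2*εs ≤ Real.sqrt r * L := by nlinarith
    rw [show δ/2 = (2*εs)/(Real.sqrt r * A0) by rw [hδ]; ring,
      div_le_div_iff₀ (by positivity) hA0]
    nlinarith
  refine ⟨t0 - δ/2, ?_, ?_⟩
  · apply Set.image_mono
    intro z hz
    obtain ⟨hz1, hz2⟩ := hz
    obtain ⟨ht01, ht02⟩ := ht0
    exact ⟨by linarith, by linarith⟩
  · intro t htmem
    obtain ⟨ht1, ht2⟩ := htmem
    have htt0 : |t - t0| ≤ δ/2 := by
      rw [abs_le]; constructor <;> linarith
    have h1 : euclDist (fun k => a k • toCirc t) (fun k => a k • toCirc t0)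
        ≤ Real.sqrt r * (2*εs/Real.sqrt r) := by
      apply euclDist_le (by positivity)
      intro k
      show dist (a k • toCirc t) (a k • toCirc t0) ≤ _
      rw [zsmul_toCirc, zsmul_toCirc]
      refine (dist_toCirc_le _ _).trans ?_
      rw [show (a k:ℝ)*t - (a k:ℝ)*t0 = (a k:ℝ)*(t - t0) by ring, abs_mul]
      have hak : |(a k:ℝ)| ≤ A0 := by
        rcases eq_or_ne k i0 with hk | hk
        · rw [hk]
        · have hlt : i0 < k := by
            rw [Fin.lt_def]
            have hkv : k.val ≠ 0 := fun h => hk (Fin.ext (by simp [hi0, h]))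
            have h0v : i0.val = 0 := rfl
            omega
          have := hmono i0 k hlt
          rw [hA0def, ha0def, ← Int.cast_abs, ← Int.cast_abs]
          exact_mod_cast this.le
      calc |(a k:ℝ)| * |t - t0| ≤ A0 * (δ/2) :=
            mul_le_mul hak htt0 (abs_nonneg _) hA0.le
        _ = 2*εs/Real.sqrt r := by rw [hδ]; field_simp; ring
    have h1' : Real.sqrt r * (2*εs/Real.sqrt r) = 2*εs := by field_simp
    calc euclDist (fun k => a k • toCirc t) u
        ≤ euclDist (fun k => a k • toCirc t) (fun k => a k • toCirc t0)
          + euclDist (fun k => a k • toCirc t0) u := euclDist_triangle _ _ _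
      _ < 2*εs + 2*εs := add_lt_add_of_le_of_lt (h1.trans_eq h1') hd0
      _ = 4*εs := by ring


end
end

section
/- Fix a selective ultrafilter p on ω, and let I ⊆ [ω, κ) be such that {[f_ξ]_p : ξ ∈ I} ∪ {[χ_{→μ}]_p : μ < κ} is a ℚ-basis of G^ω/p. Let Φ be a family of group homomorphisms from G to 𝕋 such that for every φ ∈ Φ, every ξ ∈ I and every positive integer N, p-lim_n φ((1/N)·f_ξ(n)) = φ((1/N)·χ_ξ) in 𝕋. Endow G with the initial topology induced by Φ (which is a group topology). Then every sequence h ∈ G^ω has a p-limit in G; more precisely, if [h]_p = Σ_{ξ∈I} r_ξ·[f_ξ]_p + Σ_{μ<κ} s_μ·[χ_{→μ}]_p with rational coefficients all but finitely many of which are zero, then Σ_{ξ∈I} r_ξ·χ_ξ + Σ_{μ<κ} s_μ·χ_μ is a p-limit of the sequence h. In particular, G with this topology is p-compact. -/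
open Filter Topology Set Pointwise

noncomputable section

/-- `IsPLim` is just `Tendsto` along the ultrafilter. -/
lemma isPLim_iff_tendsto {X : Type*} [TopologicalSpace X] {p : Ultrafilter ℕ} {x : ℕ → X}
    {l : X} : IsPLim p x l ↔ Filter.Tendsto x ↑p (nhds l) := by
  rw [Filter.tendsto_def]
  exact Iff.rfl

/-- The germ map as a `ℚ`-linear map. -/
def germLin {κ : Cardinal} (p : Ultrafilter ℕ) :
    (ℕ → Gk κ) →ₗ[ℚ] Filter.Germ (p : Filter ℕ) (Gk κ) where
  toFun := germOf p
  map_add' _ _ := rfl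
  map_smul' _ _ := rfl

/-- the topology induced by the homomorphisms is `p`-compact, with the
`p`-limits computed from the coordinates in the basis of `G^ω/p`. -/
theorem statement17 (κ : Cardinal) (hκ : Cardinal.aleph0 ≤ κ)
    (p : Ultrafilter ℕ) (hp : IsSelective p)
    (f : Idx κ → ℕ → Gk κ)
    (hfsupp : ∀ ξ : Idx κ, Ordinal.omega0 ≤ ξ.1 → ∀ n : ℕ, ∀ μ ∈ (f ξ n).support, μ.1 < ξ.1)
    (hfenum : ∀ g : ℕ → Gk κ, ∃ ξ : Idx κ, Ordinal.omega0 ≤ ξ.1 ∧ f ξ = g)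
    (I : Set (Idx κ)) (hIω : ∀ ξ ∈ I, Ordinal.omega0 ≤ ξ.1)
    (hbasis_ind : LinearIndependent ℚ (fun x : I ⊕ Idx κ =>
      Sum.elim (fun ξ : I => germOf p (f ξ.1)) (fun μ : Idx κ => germOf p (fun _ => chi μ)) x))
    (hbasis_span : ⊤ ≤ Submodule.span ℚ (Set.range (fun x : I ⊕ Idx κ =>
      Sum.elim (fun ξ : I => germOf p (f ξ.1)) (fun μ : Idx κ => germOf p (fun _ => chi μ)) x)))
    (Φ : Set (Gk κ →+ Circ))
    (hΦ : ∀ φ ∈ Φ, ∀ ξ ∈ I, ∀ N : ℕ, 0 < N →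
      IsPLim p (fun n => φ (((N : ℚ))⁻¹ • f ξ n)) (φ (((N : ℚ))⁻¹ • chi ξ))) :
    (∀ (h : ℕ → Gk κ) (r s : Gk κ), ↑r.support ⊆ I →
      germOf p h = (∑ ξ ∈ r.support, r ξ • germOf p (f ξ)) +
        (∑ μ ∈ s.support, s μ • germOf p (fun _ => chi μ)) →
      @IsPLim (Gk κ)
        (⨅ φ ∈ Φ, TopologicalSpace.induced (φ : Gk κ → Circ) inferInstance) p h
        ((∑ ξ ∈ r.support, r ξ • chi ξ) + (∑ μ ∈ s.support, s μ • chi μ))) ∧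
    (∀ x : ℕ → Gk κ, ∃ l : Gk κ,
      @IsPLim (Gk κ)
        (⨅ φ ∈ Φ, TopologicalSpace.induced (φ : Gk κ → Circ) inferInstance) p x l) := by
  classical
  set τ : TopologicalSpace (Gk κ) :=
    ⨅ φ ∈ Φ, TopologicalSpace.induced (φ : Gk κ → Circ) inferInstance with hτ
  -- reduce a p-limit in the initial topology to p-limits after each φ
  have limA : ∀ (h : ℕ → Gk κ) (L : Gk κ),
      (∀ φ ∈ Φ, Tendsto (fun n => φ (h n)) ↑p (𝓝 (φ L))) → @IsPLim (Gk κ) τ p h L := by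
    intro h L H
    rw [@isPLim_iff_tendsto _ τ, hτ]
    simp only [_root_.nhds_iInf, nhds_induced, tendsto_iInf, tendsto_comap_iff]
    intro φ hφ
    exact H φ hφ
  -- the key convergence for a single basic term with rational coefficient
  have limB : ∀ φ ∈ Φ, ∀ ξ : Idx κ, ξ ∈ I → ∀ q : ℚ,
      Tendsto (fun n => φ (q • f ξ n)) ↑p (𝓝 (φ (q • chi ξ))) := by
    intro φ hφ ξ hξ q
    have key : ∀ x : Gk κ, q • x = q.num • (((q.den : ℚ))⁻¹ • x) := by
      intro x
      rw [← Int.cast_smul_eq_zsmul ℚ, smul_smul, ← div_eq_mul_inv, Rat.num_div_den]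
    have h1 : Tendsto (fun n => φ (((q.den : ℚ))⁻¹ • f ξ n)) ↑p
        (𝓝 (φ (((q.den : ℚ))⁻¹ • chi ξ))) :=
      isPLim_iff_tendsto.mp (hΦ φ hφ ξ hξ q.den q.pos)
    have h2 := ((continuous_zsmul q.num).tendsto _).comp h1
    simp only [key, map_zsmul]
    exact h2
  have part1 : ∀ (h : ℕ → Gk κ) (r s : Gk κ), ↑r.support ⊆ I →
      germOf p h = (∑ ξ ∈ r.support, r ξ • germOf p (f ξ)) +
        (∑ μ ∈ s.support, s μ • germOf p (fun _ => chi μ)) →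
      @IsPLim (Gk κ) τ p h
        ((∑ ξ ∈ r.support, r ξ • chi ξ) + (∑ μ ∈ s.support, s μ • chi μ)) := by
    intro h r s hrI hgerm
    set g : ℕ → Gk κ :=
      fun n => (∑ ξ ∈ r.support, r ξ • f ξ n) + (∑ μ ∈ s.support, s μ • chi μ) with hg
    have hgfun : g = (∑ ξ ∈ r.support, r ξ • f ξ) +
        (fun _ => ∑ μ ∈ s.support, s μ • chi μ) := by
      funext n
      simp [hg, Finset.sum_apply]
    have hconstfun : (fun _ : ℕ => ∑ μ ∈ s.support, s μ • chi μ) =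
        ∑ μ ∈ s.support, s μ • (fun _ : ℕ => chi μ) := by
      funext n
      simp [Finset.sum_apply]
    have hgg : germOf p g = (∑ ξ ∈ r.support, r ξ • germOf p (f ξ)) +
        (∑ μ ∈ s.support, s μ • germOf p (fun _ => chi μ)) := by
      show germLin (κ := κ) p g = _
      rw [hgfun, hconstfun, map_add, map_sum, map_sum]
      simp only [map_smul]
      rfl
    have hpg : h =ᶠ[(↑p : Filter ℕ)] g := by
      apply Filter.Germ.coe_eq.mp
      show germOf p h = germOf p g
      rw [hgerm, hgg]
    apply limA
    intro φ hφ
    have tg : Tendsto (fun n => φ (g n)) ↑p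
        (𝓝 (φ ((∑ ξ ∈ r.support, r ξ • chi ξ) + (∑ μ ∈ s.support, s μ • chi μ)))) := by
      have e1 : ∀ n, φ (g n) =
          (∑ ξ ∈ r.support, φ (r ξ • f ξ n)) + φ (∑ μ ∈ s.support, s μ • chi μ) := by
        intro n
        simp [hg, map_add, map_sum]
      have e2 : φ ((∑ ξ ∈ r.support, r ξ • chi ξ) + (∑ μ ∈ s.support, s μ • chi μ)) =
          (∑ ξ ∈ r.support, φ (r ξ • chi ξ)) + φ (∑ μ ∈ s.support, s μ • chi μ) := by
        simp [map_add, map_sum]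
      simp only [e1, e2]
      exact (tendsto_finset_sum _ fun ξ hξ =>
        limB φ hφ ξ (hrI (Finset.mem_coe.mpr hξ)) (r ξ)).add tendsto_const_nhds
    exact tg.congr' (hpg.symm.mono fun n hn => congrArg φ hn)
  refine ⟨part1, ?_⟩
  intro x
  have hx : germOf p x ∈ Submodule.span ℚ (Set.range (fun x : I ⊕ Idx κ =>
      Sum.elim (fun ξ : I => germOf p (f ξ.1)) (fun μ : Idx κ => germOf p (fun _ => chi μ)) x)) :=
    hbasis_span Submodule.mem_top
  rw [Finsupp.mem_span_range_iff_exists_finsupp] at hx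
  obtain ⟨c, hc⟩ := hx
  set u : I ⊕ Idx κ → ℕ → Gk κ :=
    Sum.elim (fun ξ : I => f ξ.1) (fun μ : Idx κ => fun _ => chi μ) with hu
  set w : I ⊕ Idx κ → Gk κ := Sum.elim (fun ξ : I => chi ξ.1) (fun μ : Idx κ => chi μ) with hw
  refine ⟨∑ i ∈ c.support, c i • w i, ?_⟩
  set g : ℕ → Gk κ := fun n => ∑ i ∈ c.support, c i • u i n with hg
  have hgu : ∀ i : I ⊕ Idx κ, germOf p (u i) =
      Sum.elim (fun ξ : I => germOf p (f ξ.1)) (fun μ : Idx κ => germOf p (fun _ => chi μ)) i := by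
    rintro (ξ | μ) <;> rfl
  have hgg : germOf p g = ∑ i ∈ c.support, c i •
      Sum.elim (fun ξ : I => germOf p (f ξ.1)) (fun μ : Idx κ => germOf p (fun _ => chi μ)) i := by
    have hgfun : g = ∑ i ∈ c.support, c i • u i := by
      funext n
      simp [hg, Finset.sum_apply]
    show germLin (κ := κ) p g = _
    rw [hgfun, map_sum]
    simp only [map_smul]
    exact Finset.sum_congr rfl fun i _ => by
      rw [show germLin (κ := κ) p (u i) = germOf p (u i) from rfl, hgu i]
  have hpg : x =ᶠ[(↑p : Filter ℕ)] g := by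
    apply Filter.Germ.coe_eq.mp
    show germOf p x = germOf p g
    rw [hgg, ← hc, Finsupp.sum]
  apply limA
  intro φ hφ
  have tg : Tendsto (fun n => φ (g n)) ↑p (𝓝 (φ (∑ i ∈ c.support, c i • w i))) := by
    have e1 : ∀ n, φ (g n) = ∑ i ∈ c.support, φ (c i • u i n) := by
      intro n
      simp [hg, map_sum]
    have e2 : φ (∑ i ∈ c.support, c i • w i) = ∑ i ∈ c.support, φ (c i • w i) := by
      simp [map_sum]
    simp only [e1, e2]
    refine tendsto_finset_sum _ fun i _ => ?_
    rcases i with ξ | μ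
    · exact limB φ hφ ξ.1 ξ.2 (c (Sum.inl ξ))
    · exact tendsto_const_nhds
  exact tg.congr' (hpg.symm.mono fun n hn => congrArg φ hn)

end
end
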